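/- In the constrained two-environment linear regression game C-LRG with bound W > 0, suppose the least squares optimal solutions satisfy w₁*, w₂* ∈ 𝒲. If (w₁†, w₂†) is a pure Nash equilibrium of C-LRG with ‖w₁†‖∞ < W, then the ensemble predictor is optimal for environment 1, i.e. w₁† + w₂† = w₁*. Symmetrically, if ‖w₂†‖∞ < W then w₁† + w₂† = w₂*. -/

import Mathlib

/-!
An interior equilibrium action `w₁` is a local minimizer of `u ↦ R₁(u, w₂)`, a quadratic
in `u`. Along the line through `w₁` in the direction of the gradient `g = Σ₁ (w₁ + w₂) - ρ₁`
the derivative at `w₁` is `2 g ⬝ᵥ g`, which must vanish, so `Σ₁ (w₁ + w₂) = ρ₁`.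
The second player is handled the same way, since the risk depends on `w₁ + w₂` only.
-/

open Matrix

/-- Risk of an environment with second-moment matrix `S` and cross-moment vector `ρ`
at the joint action `(w₁, w₂)`:  `(w₁+w₂)ᵀ S (w₁+w₂) − 2 ρᵀ (w₁+w₂)`. -/
noncomputable def risk {n : ℕ} (S : Matrix (Fin n) (Fin n) ℝ) (ρ : Fin n → ℝ)
    (w₁ w₂ : Fin n → ℝ) : ℝ :=
  (w₁ + w₂) ⬝ᵥ (S *ᵥ (w₁ + w₂)) - 2 * (ρ ⬝ᵥ (w₁ + w₂))

theorem isLocalMin_of_forall_norm_le {E β : Type*} [SeminormedAddCommGroup E] [Preorder β]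
    {f : E → β} {a : E} {W : ℝ} (ha : ‖a‖ < W) (hmin : ∀ u, ‖u‖ ≤ W → f a ≤ f u) : IsLocalMin f a := by
  refine IsMinOn.isLocalMin (s := Metric.closedBall 0 W) (fun u hu => hmin u ?_) ?_
  · simpa using hu
  · exact Filter.mem_of_superset (Metric.isOpen_ball.mem_nhds (by simpa using ha))
      Metric.ball_subset_closedBall

theorem Matrix.IsSymm.dotProduct_mulVec_comm {n R : Type*} [Fintype n] [CommSemiring R]
    {S : Matrix n n R} (hS : S.IsSymm) (u v : n → R) : u ⬝ᵥ (S *ᵥ v) = v ⬝ᵥ (S *ᵥ u) := by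
  rw [dotProduct_mulVec, ← mulVec_transpose, hS.eq, dotProduct_comm]

theorem risk_comm {n : ℕ} (S : Matrix (Fin n) (Fin n) ℝ) (ρ u v : Fin n → ℝ) :
    risk S ρ u v = risk S ρ v u := by
  simp only [risk, add_comm u v]

theorem risk_add_smul {n : ℕ} {S : Matrix (Fin n) (Fin n) ℝ} (hS : S.IsSymm)
    (ρ a b h : Fin n → ℝ) (t : ℝ) :
    risk S ρ (a + t • h) b
      = risk S ρ a b + 2 * t * (h ⬝ᵥ (S *ᵥ (a + b) - ρ)) + t ^ 2 * (h ⬝ᵥ (S *ᵥ h)) := by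
  rw [risk, risk, show a + t • h + b = (a + b) + t • h by abel]
  generalize a + b = x
  simp only [mulVec_add, mulVec_smul, dotProduct_add, add_dotProduct, dotProduct_smul,
    smul_dotProduct, smul_eq_mul, dotProduct_sub]
  rw [hS.dotProduct_mulVec_comm x h, dotProduct_comm ρ h]
  ring

theorem hasDerivAt_risk_add_smul {n : ℕ} {S : Matrix (Fin n) (Fin n) ℝ} (hS : S.IsSymm)
    (ρ a b h : Fin n → ℝ) :
    HasDerivAt (fun t : ℝ => risk S ρ (a + t • h) b) (2 * (h ⬝ᵥ (S *ᵥ (a + b) - ρ))) 0 := by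
  simp only [risk_add_smul hS]
  simpa using ((((hasDerivAt_id (0 : ℝ)).const_mul 2).mul_const
    (h ⬝ᵥ (S *ᵥ (a + b) - ρ))).const_add (risk S ρ a b)).fun_add
      ((hasDerivAt_pow 2 (0 : ℝ)).mul_const (h ⬝ᵥ (S *ᵥ h)))

theorem mulVec_add_eq_of_isLocalMin_risk {n : ℕ} {S : Matrix (Fin n) (Fin n) ℝ}
    (hS : S.IsSymm) {ρ a b : Fin n → ℝ} (hmin : IsLocalMin (fun u => risk S ρ u b) a) :
    S *ᵥ (a + b) = ρ := by
  set g := S *ᵥ (a + b) - ρ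
  have hline : IsLocalMin ((fun u => risk S ρ u b) ∘ fun t : ℝ => a + t • g) 0 :=
    IsLocalMin.comp_continuous (by simpa using hmin) (by fun_prop)
  have hgg : 2 * (g ⬝ᵥ g) = 0 := hline.hasDerivAt_eq_zero (hasDerivAt_risk_add_smul hS ρ a b g)
  exact sub_eq_zero.mp (dotProduct_self_eq_zero.mp (by linarith))

theorem add_eq_inv_mulVec_of_isLocalMin_risk {n : ℕ} {S : Matrix (Fin n) (Fin n) ℝ}
    (hS : S.IsSymm) (hSu : IsUnit S) {ρ a b : Fin n → ℝ}
    (hmin : IsLocalMin (fun u => risk S ρ u b) a) : a + b = S⁻¹ *ᵥ ρ := by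
  have := hSu.invertible
  exact (inv_mulVec_eq_vec (mulVec_add_eq_of_isLocalMin_risk hS hmin).symm).symm

theorem clrg_nash_interior_implies_optimal_general {n : ℕ}
    (S₁ S₂ : Matrix (Fin n) (Fin n) ℝ) (hS₁ : S₁.PosDef) (hS₂ : S₂.PosDef)
    (ρ₁ ρ₂ : Fin n → ℝ) (W : ℝ)
    (w₁ w₂ : Fin n → ℝ)
    (hN₁ : ∀ u : Fin n → ℝ, ‖u‖ ≤ W → risk S₁ ρ₁ w₁ w₂ ≤ risk S₁ ρ₁ u w₂)
    (hN₂ : ∀ v : Fin n → ℝ, ‖v‖ ≤ W → risk S₂ ρ₂ w₁ w₂ ≤ risk S₂ ρ₂ w₁ v) :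
    (‖w₁‖ < W → w₁ + w₂ = S₁⁻¹ *ᵥ ρ₁) ∧ (‖w₂‖ < W → w₁ + w₂ = S₂⁻¹ *ᵥ ρ₂) := by
  constructor
  · intro hint
    exact add_eq_inv_mulVec_of_isLocalMin_risk (isHermitian_iff_isSymm.mp hS₁.isHermitian)
      hS₁.isUnit (isLocalMin_of_forall_norm_le hint hN₁)
  · intro hint
    have hN₂' : ∀ v : Fin n → ℝ, ‖v‖ ≤ W → risk S₂ ρ₂ w₂ w₁ ≤ risk S₂ ρ₂ v w₁ := by
      simpa only [risk_comm S₂ ρ₂ w₁] using hN₂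
    rw [add_comm]
    exact add_eq_inv_mulVec_of_isLocalMin_risk (isHermitian_iff_isSymm.mp hS₂.isHermitian)
      hS₂.isUnit (isLocalMin_of_forall_norm_le hint hN₂')

/-- In the constrained game C-LRG with bound `W > 0` and
`w₁*, w₂* ∈ 𝒲`: if `(w₁†, w₂†)` is a pure Nash equilibrium with `‖w₁†‖∞ < W`, then
`w₁† + w₂† = w₁*`; symmetrically, if `‖w₂†‖∞ < W` then `w₁† + w₂† = w₂*`. -/
theorem clrg_nash_interior_implies_optimal {n : ℕ}
    (S₁ S₂ : Matrix (Fin n) (Fin n) ℝ) (hS₁ : S₁.PosDef) (hS₂ : S₂.PosDef)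
    (ρ₁ ρ₂ : Fin n → ℝ) (W : ℝ) (hW : 0 < W)
    (hls₁ : ‖S₁⁻¹ *ᵥ ρ₁‖ ≤ W) (hls₂ : ‖S₂⁻¹ *ᵥ ρ₂‖ ≤ W)
    (w₁ w₂ : Fin n → ℝ) (hw₁ : ‖w₁‖ ≤ W) (hw₂ : ‖w₂‖ ≤ W)
    (hN₁ : ∀ u : Fin n → ℝ, ‖u‖ ≤ W → risk S₁ ρ₁ w₁ w₂ ≤ risk S₁ ρ₁ u w₂)
    (hN₂ : ∀ v : Fin n → ℝ, ‖v‖ ≤ W → risk S₂ ρ₂ w₁ w₂ ≤ risk S₂ ρ₂ w₁ v) :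
    (‖w₁‖ < W → w₁ + w₂ = S₁⁻¹ *ᵥ ρ₁) ∧ (‖w₂‖ < W → w₁ + w₂ = S₂⁻¹ *ᵥ ρ₂) :=
  clrg_nash_interior_implies_optimal_general S₁ S₂ hS₁ hS₂ ρ₁ ρ₂ W w₁ w₂ hN₁ hN₂
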